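/- Let n ≥ 2 and let Γ be a special torsion-free affine connection on U. If a triple (g^{ab}, μ^a, ρ) of a smooth symmetric tensor field, a smooth vector field and a smooth function on U satisfies the prolonged system ∇_c g^{ab} = μ^a δ^b_c + μ^b δ^a_c, ∇_a μ^b = ρ δ^b_a − Σ_c P_{ac} g^{bc} − (1/n) Σ_{c,d} W^b_{cda} g^{cd}, ∇_a ρ = −2 Σ_b P_{ab} μ^b + (2/n) Σ_{b,c} Y_{abc} g^{bc}, then g^{ab} satisfies the algebraic equation Σ_{a,f} T_{[ed]}^{cb}{}_{af} g^{af} = 0 for all c, b, e, d at every point of U, where T_{[ed]}^{cb}{}_{af} = ½ δ^c_{(a} W^b_{f)ed} + ½ δ^b_{(a} W^c_{f)ed} + (1/n) W^c_{(af)[e} δ^b_{d]} + (1/n) W^b_{(af)[e} δ^c_{d]} (the round brackets symmetrize over a,f with weight 1/2, the square brackets antisymmetrize over e,d with weight 1/2, and W^c_{(af)[e} denotes the Weyl tensor W^c_{xyz} with lower slots (x,y,z) = (a,f,e) symmetrized/antisymmetrized accordingly). -/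

import Mathlib

open scoped BigOperators

noncomputable section

/-- Partial derivative of `f` in the `b`-th coordinate direction at `x`. -/
def pd {n : ℕ} (b : Fin n) (f : (Fin n → ℝ) → ℝ) (x : Fin n → ℝ) : ℝ :=
  fderiv ℝ f x (Pi.single b 1)

/-- Kronecker delta. -/
def kd {n : ℕ} (a b : Fin n) : ℝ := if a = b then 1 else 0

/-- A torsion-free affine connection on `U`, given by smooth coefficients `Γ^a_{bc}`,
symmetric in the lower indices. -/
def IsConn {n : ℕ} (U : Set (Fin n → ℝ))
    (Γ : Fin n → Fin n → Fin n → (Fin n → ℝ) → ℝ) : Prop :=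
  (∀ a b c, ContDiffOn ℝ (⊤ : ℕ∞) (Γ a b c) U) ∧
  (∀ a b c, ∀ x ∈ U, Γ a b c x = Γ a c b x)

/-- Curvature tensor `R^a_{bcd}` of the connection `Γ`. -/
def curv {n : ℕ} (Γ : Fin n → Fin n → Fin n → (Fin n → ℝ) → ℝ)
    (a b c d : Fin n) (x : Fin n → ℝ) : ℝ :=
  pd c (Γ a b d) x - pd d (Γ a b c) x
    + ∑ e, (Γ a e c x * Γ e b d x - Γ a e d x * Γ e b c x)

/-- Ricci tensor `R_{bd} = Σ_a R^a_{bad}`. -/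
def ricci {n : ℕ} (Γ : Fin n → Fin n → Fin n → (Fin n → ℝ) → ℝ)
    (b d : Fin n) (x : Fin n → ℝ) : ℝ :=
  ∑ a, curv Γ a b a d x

/-- Projective Schouten tensor `P_{ab} = (1/(n-1)) R_{(ab)} - (1/(n+1)) R_{[ab]}`. -/
def schouten {n : ℕ} (Γ : Fin n → Fin n → Fin n → (Fin n → ℝ) → ℝ)
    (a b : Fin n) (x : Fin n → ℝ) : ℝ :=
  (1/((n : ℝ) - 1)) * ((ricci Γ a b x + ricci Γ b a x)/2)
    - (1/((n : ℝ) + 1)) * ((ricci Γ a b x - ricci Γ b a x)/2)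

/-- Projective Weyl tensor
`W^a_{bcd} = R^a_{bcd} - δ^a_c P_{db} + δ^a_d P_{cb} + 2 δ^a_b P_{[cd]}`. -/
def weyl {n : ℕ} (Γ : Fin n → Fin n → Fin n → (Fin n → ℝ) → ℝ)
    (a b c d : Fin n) (x : Fin n → ℝ) : ℝ :=
  curv Γ a b c d x - kd a c * schouten Γ d b x + kd a d * schouten Γ c b x
    + 2 * kd a b * ((schouten Γ c d x - schouten Γ d c x)/2)

/-- Covariant derivative `∇_a P_{bc}` of the projective Schouten tensor. -/
def covSchouten {n : ℕ} (Γ : Fin n → Fin n → Fin n → (Fin n → ℝ) → ℝ)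
    (a b c : Fin n) (x : Fin n → ℝ) : ℝ :=
  pd a (schouten Γ b c) x - (∑ e, Γ e b a x * schouten Γ e c x)
    - (∑ e, Γ e c a x * schouten Γ b e x)

/-- Projective Cotton tensor `Y_{bca} = ∇_b P_{ca} - ∇_c P_{ba}`. -/
def cotton {n : ℕ} (Γ : Fin n → Fin n → Fin n → (Fin n → ℝ) → ℝ)
    (b c a : Fin n) (x : Fin n → ℝ) : ℝ :=
  covSchouten Γ b c a x - covSchouten Γ c b a x

/-- Covariant derivative `∇_e W^a_{bcd}` of the projective Weyl tensor. -/
def covWeyl {n : ℕ} (Γ : Fin n → Fin n → Fin n → (Fin n → ℝ) → ℝ)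
    (e a b c d : Fin n) (x : Fin n → ℝ) : ℝ :=
  pd e (weyl Γ a b c d) x + (∑ f, Γ a f e x * weyl Γ f b c d x)
    - (∑ f, Γ f b e x * weyl Γ a f c d x)
    - (∑ f, Γ f c e x * weyl Γ a b f d x)
    - (∑ f, Γ f d e x * weyl Γ a b c f x)

/-- Covariant derivative `∇_a Y_{bcd}` of the projective Cotton tensor. -/
def covCotton {n : ℕ} (Γ : Fin n → Fin n → Fin n → (Fin n → ℝ) → ℝ)
    (a b c d : Fin n) (x : Fin n → ℝ) : ℝ :=
  pd a (cotton Γ b c d) x - (∑ e, Γ e b a x * cotton Γ e c d x)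
    - (∑ e, Γ e c a x * cotton Γ b e d x)
    - (∑ e, Γ e d a x * cotton Γ b c e x)

/-- Covariant derivative `∇_a A_b` of a 1-form `A`. -/
def cov1 {n : ℕ} (Γ : Fin n → Fin n → Fin n → (Fin n → ℝ) → ℝ)
    (a b : Fin n) (A : Fin n → (Fin n → ℝ) → ℝ) (x : Fin n → ℝ) : ℝ :=
  pd a (A b) x - ∑ e, Γ e b a x * A e x

/-- Covariant derivative `∇_c g^{ab}` of a (2,0)-tensor `g`. -/
def covUp2 {n : ℕ} (Γ : Fin n → Fin n → Fin n → (Fin n → ℝ) → ℝ)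
    (c a b : Fin n) (g : Fin n → Fin n → (Fin n → ℝ) → ℝ) (x : Fin n → ℝ) : ℝ :=
  pd c (g a b) x + (∑ e, Γ a e c x * g e b x) + (∑ e, Γ b e c x * g a e x)

/-- Covariant derivative `∇_a μ^b` of a vector field `μ`. -/
def covVec {n : ℕ} (Γ : Fin n → Fin n → Fin n → (Fin n → ℝ) → ℝ)
    (a b : Fin n) (μ : Fin n → (Fin n → ℝ) → ℝ) (x : Fin n → ℝ) : ℝ :=
  pd a (μ b) x + ∑ e, Γ b e a x * μ e x

/-- A smooth pseudo-Riemannian metric on `U`: smooth, symmetric, and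
nondegenerate at every point of `U`. -/
def IsMetric {n : ℕ} (U : Set (Fin n → ℝ))
    (g : Fin n → Fin n → (Fin n → ℝ) → ℝ) : Prop :=
  (∀ a b, ContDiffOn ℝ (⊤ : ℕ∞) (g a b) U) ∧
  (∀ a b, ∀ x ∈ U, g a b x = g b a x) ∧
  (∀ x ∈ U, (Matrix.of fun a b => g a b x).det ≠ 0)

/-- Pointwise inverse `g^{ab}` of a metric (or pointwise matrix inverse of any
2-index field). -/
def minv {n : ℕ} (g : Fin n → Fin n → (Fin n → ℝ) → ℝ)
    (a b : Fin n) (x : Fin n → ℝ) : ℝ :=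
  (Matrix.of fun i j => g i j x)⁻¹ a b

/-- Levi-Civita connection coefficients
`Γ^a_{bc} = ½ Σ_d g^{ad}(∂_b g_{dc} + ∂_c g_{bd} - ∂_d g_{bc})` of a metric `g`. -/
def levicivita {n : ℕ} (g : Fin n → Fin n → (Fin n → ℝ) → ℝ)
    (a b c : Fin n) (x : Fin n → ℝ) : ℝ :=
  (1/2) * ∑ d, minv g a d x * (pd b (g d c) x + pd c (g b d) x - pd d (g b c) x)

/-- Ricci scalar `R = Σ_{a,b} g^{ab} R_{ab}` of a metric `g`. -/
def ricciScalar {n : ℕ} (g : Fin n → Fin n → (Fin n → ℝ) → ℝ)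
    (x : Fin n → ℝ) : ℝ :=
  ∑ a, ∑ b, minv g a b x * ricci (levicivita g) a b x

/-- Metric Schouten tensor `LCP_{ab} = (1/(n-2))(R_{ab} - R g_{ab}/(2(n-1)))`. -/
def lcSchouten {n : ℕ} (g : Fin n → Fin n → (Fin n → ℝ) → ℝ)
    (a b : Fin n) (x : Fin n → ℝ) : ℝ :=
  (1/((n : ℝ) - 2)) *
    (ricci (levicivita g) a b x - ricciScalar g x * g a b x / (2*((n : ℝ) - 1)))

/-- Metric (conformal) Weyl tensor of a metric `g`. -/
def lcWeyl {n : ℕ} (g : Fin n → Fin n → (Fin n → ℝ) → ℝ)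
    (a b c d : Fin n) (x : Fin n → ℝ) : ℝ :=
  curv (levicivita g) a b c d x - kd a c * lcSchouten g d b x
    + kd a d * lcSchouten g c b x
    - (∑ e, g b d x * minv g a e x * lcSchouten g e c x)
    + (∑ e, g b c x * minv g a e x * lcSchouten g e d x)

/-- `Γ'` is projectively equivalent to `Γ` on `U`:
`Γ'^a_{bc} = Γ^a_{bc} + δ^a_c A_b + δ^a_b A_c` for some smooth 1-form `A`. -/
def ProjEquiv {n : ℕ} (U : Set (Fin n → ℝ))
    (Γ' Γ : Fin n → Fin n → Fin n → (Fin n → ℝ) → ℝ) : Prop :=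
  ∃ A : Fin n → (Fin n → ℝ) → ℝ, (∀ a, ContDiffOn ℝ (⊤ : ℕ∞) (A a) U) ∧
    ∀ a b c, ∀ x ∈ U, Γ' a b c x = Γ a b c x + kd a c * A b x + kd a b * A c x

/-- A connection is special on `U` if its projective Schouten tensor is symmetric. -/
def IsSpecial {n : ℕ} (U : Set (Fin n → ℝ))
    (Γ : Fin n → Fin n → Fin n → (Fin n → ℝ) → ℝ) : Prop :=
  ∀ a b, ∀ x ∈ U, schouten Γ a b x = schouten Γ b a x

/-- A smooth symmetric (2,0)-tensor field on `U`. -/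
def SmoothSym2 {n : ℕ} (U : Set (Fin n → ℝ))
    (g : Fin n → Fin n → (Fin n → ℝ) → ℝ) : Prop :=
  (∀ a b, ContDiffOn ℝ (⊤ : ℕ∞) (g a b) U) ∧ (∀ a b, ∀ x ∈ U, g a b x = g b a x)

/-- The prolonged metrisability system (3.10) for `(g^{ab}, μ^a, ρ)`:
`∇_c g^{ab} = μ^a δ^b_c + μ^b δ^a_c`,
`∇_a μ^b = ρ δ^b_a - Σ_c P_{ac} g^{bc} - (1/n) Σ_{c,d} W^b_{cda} g^{cd}`,
`∇_a ρ = -2 Σ_b P_{ab} μ^b + (2/n) Σ_{b,c} Y_{abc} g^{bc}`. -/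
def ProlongedSys {n : ℕ} (U : Set (Fin n → ℝ))
    (Γ : Fin n → Fin n → Fin n → (Fin n → ℝ) → ℝ)
    (g : Fin n → Fin n → (Fin n → ℝ) → ℝ)
    (μ : Fin n → (Fin n → ℝ) → ℝ) (ρ : (Fin n → ℝ) → ℝ) : Prop :=
  (∀ a b c, ∀ x ∈ U, covUp2 Γ c a b g x = μ a x * kd b c + μ b x * kd a c) ∧
  (∀ a b, ∀ x ∈ U, covVec Γ a b μ x =
      ρ x * kd b a - (∑ c, schouten Γ a c x * g b c x)
        - (1/(n : ℝ)) * ∑ c, ∑ d, weyl Γ b c d a x * g c d x) ∧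
  (∀ a, ∀ x ∈ U, pd a ρ x =
      -2 * (∑ b, schouten Γ a b x * μ b x)
        + (2/(n : ℝ)) * ∑ b, ∑ c, cotton Γ a b c x * g b c x)

/-- The tensor `T_{[ed]}^{cb}{}_{af}` of Proposition 3.6 (eq. (3.12)). -/
def Ttensor {n : ℕ} (Γ : Fin n → Fin n → Fin n → (Fin n → ℝ) → ℝ)
    (e d c b a f : Fin n) (x : Fin n → ℝ) : ℝ :=
  (1/2) * ((kd c a * weyl Γ b f e d x + kd c f * weyl Γ b a e d x)/2)
  + (1/2) * ((kd b a * weyl Γ c f e d x + kd b f * weyl Γ c a e d x)/2)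
  + (1/(n : ℝ)) * ((((weyl Γ c a f e x + weyl Γ c f a e x)/2) * kd b d
      - ((weyl Γ c a f d x + weyl Γ c f a d x)/2) * kd b e)/2)
  + (1/(n : ℝ)) * ((((weyl Γ b a f e x + weyl Γ b f a e x)/2) * kd c d
      - ((weyl Γ b a f d x + weyl Γ b f a d x)/2) * kd c e)/2)

/-- The tensor `S_{[ae]}^b{}_{cd}` of Proposition 3.8. -/
def Stensor {n : ℕ} (Γ : Fin n → Fin n → Fin n → (Fin n → ℝ) → ℝ)
    (a e b c d : Fin n) (x : Fin n → ℝ) : ℝ :=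
  (((n : ℝ) - 2)/2) * ((cotton Γ e a c x * kd b d + cotton Γ e a d x * kd b c)/2)
  + (covWeyl Γ c b d e a x + covWeyl Γ d b c e a x)/2
  + (((covWeyl Γ a b c d e x + covWeyl Γ a b d c e x)/2)
      - ((covWeyl Γ e b c d a x + covWeyl Γ e b d c a x)/2))/2

/-- The tensor `U_{[ab]cd}` of Proposition 3.9. -/
def Utensor {n : ℕ} (Γ : Fin n → Fin n → Fin n → (Fin n → ℝ) → ℝ)
    (a b c d : Fin n) (x : Fin n → ℝ) : ℝ :=
  (((covCotton Γ a b c d x + covCotton Γ a b d c x)/2)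
      - ((covCotton Γ b a c d x + covCotton Γ b a d c x)/2))/2
  + ∑ e, (((weyl Γ e c d a x + weyl Γ e d c a x)/2) * schouten Γ b e x
      - ((weyl Γ e c d b x + weyl Γ e d c b x)/2) * schouten Γ a e x)/2

end



section ProofHelpers

variable {n : ℕ} {x : Fin n → ℝ} {f h : (Fin n → ℝ) → ℝ} {b : Fin n}

lemma pd_congr {U : Set (Fin n → ℝ)} (hUo : IsOpen U) (hx : x ∈ U)
    (hfh : ∀ y ∈ U, f y = h y) : pd b f x = pd b h x := by
  unfold pd
  rw [Filter.EventuallyEq.fderiv_eq (Filter.eventually_of_mem (hUo.mem_nhds hx) hfh)]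

lemma cdiff_at {U : Set (Fin n → ℝ)} (hUo : IsOpen U) (hx : x ∈ U)
    (hf : ContDiffOn ℝ (⊤ : ℕ∞) f U) : DifferentiableAt ℝ f x :=
  (hf.contDiffAt (hUo.mem_nhds hx)).differentiableAt (by simp)

lemma pd_add (hf : DifferentiableAt ℝ f x) (hh : DifferentiableAt ℝ h x) :
    pd b (fun y => f y + h y) x = pd b f x + pd b h x := by
  unfold pd; rw [fderiv_fun_add hf hh]; rfl

lemma pd_sub (hf : DifferentiableAt ℝ f x) (hh : DifferentiableAt ℝ h x) :
    pd b (fun y => f y - h y) x = pd b f x - pd b h x := by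
  unfold pd; rw [fderiv_fun_sub hf hh]; rfl

lemma pd_mul (hf : DifferentiableAt ℝ f x) (hh : DifferentiableAt ℝ h x) :
    pd b (fun y => f y * h y) x = pd b f x * h x + f x * pd b h x := by
  unfold pd; rw [fderiv_fun_mul hf hh]
  simp only [ContinuousLinearMap.add_apply, ContinuousLinearMap.smul_apply, smul_eq_mul]
  ring

lemma pd_mul_const (r : ℝ) (hf : DifferentiableAt ℝ f x) :
    pd b (fun y => f y * r) x = pd b f x * r := by
  unfold pd; rw [fderiv_mul_const hf]
  simp only [ContinuousLinearMap.smul_apply, smul_eq_mul]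
  ring

lemma pd_sum {ι : Type*} (s : Finset ι) (A : ι → (Fin n → ℝ) → ℝ)
    (hA : ∀ i ∈ s, DifferentiableAt ℝ (A i) x) :
    pd b (fun y => ∑ i ∈ s, A i y) x = ∑ i ∈ s, pd b (A i) x := by
  unfold pd; rw [fderiv_fun_sum hA, ContinuousLinearMap.coe_sum', Finset.sum_apply]

lemma pd_comm {U : Set (Fin n → ℝ)} (hUo : IsOpen U) (hx : x ∈ U)
    (hf : ContDiffOn ℝ (⊤ : ℕ∞) f U) (e d : Fin n) :
    pd e (fun y => pd d f y) x = pd d (fun y => pd e f y) x := by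
  have hct : ContDiffAt ℝ (⊤ : ℕ∞) f x := hf.contDiffAt (hUo.mem_nhds hx)
  have hdf : DifferentiableAt ℝ (fderiv ℝ f) x :=
    (hct.fderiv_right (m := 1) (WithTop.coe_le_coe.mpr le_top)).differentiableAt one_ne_zero
  have hsym := hct.isSymmSndFDerivAt (by rw [minSmoothness_of_isRCLikeNormedField]; exact WithTop.coe_le_coe.mpr le_top)
  unfold pd
  rw [fderiv_clm_apply hdf (differentiableAt_const _),
      fderiv_clm_apply hdf (differentiableAt_const _)]
  simp [hsym (Pi.single e 1) (Pi.single d 1)]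

lemma sum_kd_mul (c : Fin n) (F : Fin n → ℝ) : ∑ a, kd c a * F a = F c := by
  simp [kd, ite_mul]

lemma sum_mul_kd (u : Fin n) (F : Fin n → ℝ) : ∑ a, F a * kd a u = F u := by
  simp [kd, mul_ite]

lemma sum_sum_kd_inner (c : Fin n) (h : Fin n → Fin n → ℝ) :
    ∑ a, ∑ f, kd c f * h a f = ∑ a, h a c :=
  Finset.sum_congr rfl fun a _ => sum_kd_mul c (h a)

end ProofHelpers

/-- (Proposition 3.6) If `(g^{ab}, μ^a, ρ)` solves the prolonged system
for a special connection `Γ`, then `g^{ab}` satisfies the algebraic equation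
`Σ_{a,f} T_{[ed]}^{cb}{}_{af} g^{af} = 0`. -/

theorem prolonged_implies_T_obstruction {n : ℕ} (hn : 2 ≤ n)
    (U : Set (Fin n → ℝ)) (hUo : IsOpen U) (hUne : U.Nonempty)
    (Γ : Fin n → Fin n → Fin n → (Fin n → ℝ) → ℝ) (hΓ : IsConn U Γ)
    (hsp : IsSpecial U Γ)
    (gup : Fin n → Fin n → (Fin n → ℝ) → ℝ) (μ : Fin n → (Fin n → ℝ) → ℝ)
    (ρ : (Fin n → ℝ) → ℝ)
    (hgs : SmoothSym2 U gup) (hμ : ∀ a, ContDiffOn ℝ (⊤ : ℕ∞) (μ a) U)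
    (hρ : ContDiffOn ℝ (⊤ : ℕ∞) ρ U)
    (hsys : ProlongedSys U Γ gup μ ρ) :
    ∀ x ∈ U, ∀ e d c b : Fin n,
      (∑ a, ∑ f, Ttensor Γ e d c b a f x * gup a f x) = 0 := by
  intro x hx e d c b
  obtain ⟨hΓsm, hΓsym⟩ := hΓ
  obtain ⟨hgsm, hgsym⟩ := hgs
  obtain ⟨hsys1, hsys2, hsys3⟩ := hsys
  have hdΓ : ∀ a b' c', DifferentiableAt ℝ (Γ a b' c') x := fun a b' c' =>
    cdiff_at hUo hx (hΓsm a b' c')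
  have hdg : ∀ a b', DifferentiableAt ℝ (gup a b') x := fun a b' =>
    cdiff_at hUo hx (hgsm a b')
  have hdμ : ∀ a, DifferentiableAt ℝ (μ a) x := fun a => cdiff_at hUo hx (hμ a)
  have hpdg : ∀ (v c' b' : Fin n), ∀ y ∈ U, pd v (gup c' b') y =
      μ c' y * kd b' v + μ b' y * kd c' v - (∑ f, Γ c' f v y * gup f b' y)
        - (∑ f, Γ b' f v y * gup c' f y) := by
    intro v c' b' y hy
    have h := hsys1 c' b' v y hy
    unfold covUp2 at h
    linarith [h]
  have hpdμ : ∀ (u c' : Fin n), pd u (μ c') x =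
      ρ x * kd c' u - (∑ f, schouten Γ u f x * gup c' f x)
      - (1/(n:ℝ)) * (∑ a, ∑ f, weyl Γ c' a f u x * gup a f x)
      - (∑ f, Γ c' f u x * μ f x) := by
    intro u c'
    have h := hsys2 u c' x hx
    unfold covVec at h
    linarith [h]
  have hswap : pd e (fun y => μ c y * kd b d + μ b y * kd c d - (∑ f, Γ c f d y * gup f b y) - (∑ f, Γ b f d y * gup c f y)) x = pd d (fun y => μ c y * kd b e + μ b y * kd c e - (∑ f, Γ c f e y * gup f b y) - (∑ f, Γ b f e y * gup c f y)) x := by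
    have h1 := pd_congr (b := e) hUo hx (fun y hy => (hpdg d c b y hy).symm)
    have h2 := pd_congr (b := d) hUo hx (fun y hy => hpdg e c b y hy)
    exact h1.trans ((pd_comm hUo hx (hgsm c b) e d).trans h2)
  have hYexp : ∀ u v : Fin n, pd u (fun y => μ c y * kd b v + μ b y * kd c v - (∑ f, Γ c f v y * gup f b y) - (∑ f, Γ b f v y * gup c f y)) x = ρ x * kd c u * kd b v + ρ x * kd b u * kd c v - (∑ f, schouten Γ u f x * gup c f x) * kd b v - (∑ f, schouten Γ u f x * gup b f x) * kd c v - (1/(n:ℝ)) * (∑ a, ∑ f, weyl Γ c a f u x * gup a f x) * kd b v - (1/(n:ℝ)) * (∑ a, ∑ f, weyl Γ b a f u x * gup a f x) * kd c v - (∑ f, Γ c f u x * μ f x) * kd b v - (∑ f, Γ b f u x * μ f x) * kd c v - (∑ f, pd u (Γ c f v) x * gup f b x) - (∑ f, pd u (Γ b f v) x * gup c f x) - (∑ f, Γ c f v x * μ f x) * kd b u - μ b x * Γ c u v x + (∑ f, ∑ h, Γ c f v x * (Γ f h u x * gup h b x)) + (∑ f, ∑ h, Γ c f v x * (Γ b h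 u x * gup f h x)) - μ c x * Γ b u v x - (∑ f, Γ b f v x * μ f x) * kd c u + (∑ f, ∑ h, Γ b f v x * (Γ c h u x * gup h f x)) + (∑ f, ∑ h, Γ b f v x * (Γ f h u x * gup c h x)) := by
    intro u v
    have dμc : DifferentiableAt ℝ (fun y => μ c y * kd b v) x := (hdμ c).mul_const _
    have dμb : DifferentiableAt ℝ (fun y => μ b y * kd c v) x := (hdμ b).mul_const _
    have dS1 : DifferentiableAt ℝ (fun y => ∑ f, Γ c f v y * gup f b y) x := by
      apply DifferentiableAt.fun_sum; intro f _; exact (hdΓ c f v).mul (hdg f b)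
    have dS2 : DifferentiableAt ℝ (fun y => ∑ f, Γ b f v y * gup c f y) x := by
      apply DifferentiableAt.fun_sum; intro f _; exact (hdΓ b f v).mul (hdg c f)
    have dA : DifferentiableAt ℝ (fun y => μ c y * kd b v + μ b y * kd c v) x := dμc.add dμb
    have dAS : DifferentiableAt ℝ
        (fun y => μ c y * kd b v + μ b y * kd c v - (∑ f, Γ c f v y * gup f b y)) x := dA.sub dS1
    have st1 : pd u (fun y => μ c y * kd b v + μ b y * kd c v - (∑ f, Γ c f v y * gup f b y) - (∑ f, Γ b f v y * gup c f y)) x =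
        pd u (fun y => μ c y * kd b v + μ b y * kd c v - (∑ f, Γ c f v y * gup f b y)) x
        - pd u (fun y => ∑ f, Γ b f v y * gup c f y) x := pd_sub dAS dS2
    have st2 : pd u (fun y => μ c y * kd b v + μ b y * kd c v - (∑ f, Γ c f v y * gup f b y)) x
        = pd u (fun y => μ c y * kd b v + μ b y * kd c v) x
          - pd u (fun y => ∑ f, Γ c f v y * gup f b y) x := pd_sub dA dS1
    have st3 : pd u (fun y => μ c y * kd b v + μ b y * kd c v) x
        = pd u (fun y => μ c y * kd b v) x + pd u (fun y => μ b y * kd c v) x := pd_add dμc dμb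
    have st4 : pd u (fun y => μ c y * kd b v) x = pd u (μ c) x * kd b v :=
      pd_mul_const _ (hdμ c)
    have st5 : pd u (fun y => μ b y * kd c v) x = pd u (μ b) x * kd c v :=
      pd_mul_const _ (hdμ b)
    have st6 : pd u (fun y => ∑ f, Γ c f v y * gup f b y) x
        = ∑ f, pd u (fun y => Γ c f v y * gup f b y) x :=
      pd_sum _ _ (fun f _ => (hdΓ c f v).mul (hdg f b))
    have st7 : pd u (fun y => ∑ f, Γ b f v y * gup c f y) x
        = ∑ f, pd u (fun y => Γ b f v y * gup c f y) x :=
      pd_sum _ _ (fun f _ => (hdΓ b f v).mul (hdg c f))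
    have hs1 : ∑ f, pd u (fun y => Γ c f v y * gup f b y) x
        = (∑ f, pd u (Γ c f v) x * gup f b x) + (∑ f, Γ c f v x * μ f x) * kd b u
          + Γ c u v x * μ b x
          - (∑ f, ∑ h, Γ c f v x * (Γ f h u x * gup h b x))
          - (∑ f, ∑ h, Γ c f v x * (Γ b h u x * gup f h x)) := by
      have e1 : ∀ f : Fin n, pd u (fun y => Γ c f v y * gup f b y) x
          = pd u (Γ c f v) x * gup f b x + (Γ c f v x * μ f x) * kd b u
            + (Γ c f v x * μ b x) * kd f u
            - (∑ h, Γ c f v x * (Γ f h u x * gup h b x))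
            - (∑ h, Γ c f v x * (Γ b h u x * gup f h x)) := by
        intro f
        rw [pd_mul (hdΓ c f v) (hdg f b), hpdg u f b x hx, mul_sub, mul_sub, mul_add,
            Finset.mul_sum, Finset.mul_sum]
        ring
      rw [Finset.sum_congr rfl fun f _ => e1 f]
      rw [Finset.sum_sub_distrib, Finset.sum_sub_distrib, Finset.sum_add_distrib,
          Finset.sum_add_distrib, ← Finset.sum_mul, sum_mul_kd]
    have hs2 : ∑ f, pd u (fun y => Γ b f v y * gup c f y) x
        = (∑ f, pd u (Γ b f v) x * gup c f x) + Γ b u v x * μ c x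
          + (∑ f, Γ b f v x * μ f x) * kd c u
          - (∑ f, ∑ h, Γ b f v x * (Γ c h u x * gup h f x))
          - (∑ f, ∑ h, Γ b f v x * (Γ f h u x * gup c h x)) := by
      have e2 : ∀ f : Fin n, pd u (fun y => Γ b f v y * gup c f y) x
          = pd u (Γ b f v) x * gup c f x + (Γ b f v x * μ c x) * kd f u
            + (Γ b f v x * μ f x) * kd c u
            - (∑ h, Γ b f v x * (Γ c h u x * gup h f x))
            - (∑ h, Γ b f v x * (Γ f h u x * gup c h x)) := by
        intro f
        rw [pd_mul (hdΓ b f v) (hdg c f), hpdg u c f x hx, mul_sub, mul_sub, mul_add,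
            Finset.mul_sum, Finset.mul_sum]
        ring
      rw [Finset.sum_congr rfl fun f _ => e2 f]
      rw [Finset.sum_sub_distrib, Finset.sum_sub_distrib, Finset.sum_add_distrib,
          Finset.sum_add_distrib, ← Finset.sum_mul, sum_mul_kd]
    rw [st1, st2, st3, st4, st5, st6, st7, hs1, hs2, hpdμ u c, hpdμ u b]
    ring
  have hM : ρ x * kd c e * kd b d + ρ x * kd b e * kd c d - (∑ f, schouten Γ e f x * gup c f x) * kd b d - (∑ f, schouten Γ e f x * gup b f x) * kd c d - (1/(n:ℝ)) * (∑ a, ∑ f, weyl Γ c a f e x * gup a f x) * kd b d - (1/(n:ℝ)) * (∑ a, ∑ f, weyl Γ b a f e x * gup a f x) * kd c d - (∑ f, Γ c f e x * μ f x) * kd b d - (∑ f, Γ b f e x * μ f x) * kd c d - (∑ f, pd e (Γ c f d) x * gup f b x) - (∑ f, pd e (Γ b f d) x * gup c f x) - (∑ f, Γ c f d x * μ f x) * kd b e - μ b x * Γ c e d x + (∑ f, ∑ h, Γ c f d x * (Γ f h e x * gup h b x)) + (∑ f, ∑ h, Γ c f d x * (Γ b h e x * gup f h x)) - μ c x * Γ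 b e d x - (∑ f, Γ b f d x * μ f x) * kd c e + (∑ f, ∑ h, Γ b f d x * (Γ c h e x * gup h f x)) + (∑ f, ∑ h, Γ b f d x * (Γ f h e x * gup c h x)) = ρ x * kd c d * kd b e + ρ x * kd b d * kd c e - (∑ f, schouten Γ d f x * gup c f x) * kd b e - (∑ f, schouten Γ d f x * gup b f x) * kd c e - (1/(n:ℝ)) * (∑ a, ∑ f, weyl Γ c a f d x * gup a f x) * kd b e - (1/(n:ℝ)) * (∑ a, ∑ f, weyl Γ b a f d x * gup a f x) * kd c e - (∑ f, Γ c f d x * μ f x) * kd b e - (∑ f, Γ b f d x * μ f x) * kd c e - (∑ f, pd d (Γ c f e) x * gup f b x) - (∑ f, pd d (Γ b f e) x * gup c f x) - (∑ f, Γ c f e x * μ f x) * kd b d - μ b x * Γ c d e x + (∑ f, ∑ h, Γ c f e x * (Γ f h d x * gup h b x)) + (∑ f, ∑ h, Γ c f e x * (Γ b h d x * gup f h x)) - μ c x * Γ b d e x - (∑ f, Γ b f e x * μ f x) * kd c d + (∑ f, ∑ h, Γ b f e x * (Γ c h d x * gup h f x)) + (∑ f, ∑ h, Γ b f e x * (Γ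 f h d x * gup c h x)) :=
    (hYexp e d).symm.trans (hswap.trans (hYexp d e))
  -- bridges
  have bT1 : Γ c d e x = Γ c e d x := hΓsym c d e x hx
  have bT2 : Γ b d e x = Γ b e d x := hΓsym b d e x hx
  have bX : (∑ f, ∑ h, Γ b f d x * (Γ c h e x * gup h f x)) = (∑ f, ∑ h, Γ c f e x * (Γ b h d x * gup f h x)) := by
    rw [Finset.sum_comm]
    exact Finset.sum_congr rfl fun f _ => Finset.sum_congr rfl fun h _ => by ring
  have bX2 : (∑ f, ∑ h, Γ b f e x * (Γ c h d x * gup h f x)) = (∑ f, ∑ h, Γ c f d x * (Γ b h e x * gup f h x)) := by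
    rw [Finset.sum_comm]
    exact Finset.sum_congr rfl fun f _ => Finset.sum_congr rfl fun h _ => by ring
  have hRC1 : (∑ f, curv Γ c f e d x * gup f b x)
      = (∑ f, pd e (Γ c f d) x * gup f b x) - (∑ f, pd d (Γ c f e) x * gup f b x) + (∑ f, ∑ h, Γ c f e x * (Γ f h d x * gup h b x)) - (∑ f, ∑ h, Γ c f d x * (Γ f h e x * gup h b x)) := by
    have e3 : ∀ f : Fin n, curv Γ c f e d x * gup f b x
        = pd e (Γ c f d) x * gup f b x - pd d (Γ c f e) x * gup f b x
          + (∑ h, Γ c h e x * Γ h f d x * gup f b x)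
          - (∑ h, Γ c h d x * Γ h f e x * gup f b x) := by
      intro f
      unfold curv
      rw [Finset.sum_sub_distrib, add_mul, sub_mul, sub_mul, Finset.sum_mul, Finset.sum_mul]
      ring
    rw [Finset.sum_congr rfl fun f _ => e3 f]
    rw [Finset.sum_sub_distrib, Finset.sum_add_distrib, Finset.sum_sub_distrib]
    have b1 : (∑ f, ∑ h, Γ c h e x * Γ h f d x * gup f b x) = (∑ f, ∑ h, Γ c f e x * (Γ f h d x * gup h b x)) := by
      rw [Finset.sum_comm]
      exact Finset.sum_congr rfl fun f _ => Finset.sum_congr rfl fun h _ => by ring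
    have b2 : (∑ f, ∑ h, Γ c h d x * Γ h f e x * gup f b x) = (∑ f, ∑ h, Γ c f d x * (Γ f h e x * gup h b x)) := by
      rw [Finset.sum_comm]
      exact Finset.sum_congr rfl fun f _ => Finset.sum_congr rfl fun h _ => by ring
    rw [b1, b2]
  have hRB1 : (∑ f, curv Γ b f e d x * gup c f x)
      = (∑ f, pd e (Γ b f d) x * gup c f x) - (∑ f, pd d (Γ b f e) x * gup c f x) + (∑ f, ∑ h, Γ b f e x * (Γ f h d x * gup c h x)) - (∑ f, ∑ h, Γ b f d x * (Γ f h e x * gup c h x)) := by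
    have e3 : ∀ f : Fin n, curv Γ b f e d x * gup c f x
        = pd e (Γ b f d) x * gup c f x - pd d (Γ b f e) x * gup c f x
          + (∑ h, Γ b h e x * Γ h f d x * gup c f x)
          - (∑ h, Γ b h d x * Γ h f e x * gup c f x) := by
      intro f
      unfold curv
      rw [Finset.sum_sub_distrib, add_mul, sub_mul, sub_mul, Finset.sum_mul, Finset.sum_mul]
      ring
    rw [Finset.sum_congr rfl fun f _ => e3 f]
    rw [Finset.sum_sub_distrib, Finset.sum_add_distrib, Finset.sum_sub_distrib]
    have b1 : (∑ f, ∑ h, Γ b h e x * Γ h f d x * gup c f x) = (∑ f, ∑ h, Γ b f e x * (Γ f h d x * gup c h x)) := by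
      rw [Finset.sum_comm]
      exact Finset.sum_congr rfl fun f _ => Finset.sum_congr rfl fun h _ => by ring
    have b2 : (∑ f, ∑ h, Γ b h d x * Γ h f e x * gup c f x) = (∑ f, ∑ h, Γ b f d x * (Γ f h e x * gup c h x)) := by
      rw [Finset.sum_comm]
      exact Finset.sum_congr rfl fun f _ => Finset.sum_congr rfl fun h _ => by ring
    rw [b1, b2]
  have hRC2 : (∑ f, curv Γ c f e d x * gup f b x)
      = (∑ f, weyl Γ c f e d x * gup b f x) + kd c e * (∑ f, schouten Γ d f x * gup b f x) - kd c d * (∑ f, schouten Γ e f x * gup b f x) := by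
    have hw : ∀ f : Fin n, curv Γ c f e d x
        = weyl Γ c f e d x + kd c e * schouten Γ d f x - kd c d * schouten Γ e f x := by
      intro f
      unfold weyl
      rw [hsp e d x hx]
      ring
    have step : (∑ f, curv Γ c f e d x * gup f b x)
        = (∑ f, weyl Γ c f e d x * gup f b x)
          + kd c e * (∑ f, schouten Γ d f x * gup f b x)
          - kd c d * (∑ f, schouten Γ e f x * gup f b x) := by
      rw [Finset.sum_congr rfl fun f _ => show curv Γ c f e d x * gup f b x
          = weyl Γ c f e d x * gup f b x + kd c e * (schouten Γ d f x * gup f b x)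
            - kd c d * (schouten Γ e f x * gup f b x) from by rw [hw f]; ring]
      rw [Finset.sum_sub_distrib, Finset.sum_add_distrib, ← Finset.mul_sum, ← Finset.mul_sum]
    rw [step]
    rw [Finset.sum_congr rfl fun f _ => show weyl Γ c f e d x * gup f b x
          = weyl Γ c f e d x * gup b f x from by rw [hgsym f b x hx],
        Finset.sum_congr rfl fun f _ => show schouten Γ d f x * gup f b x
          = schouten Γ d f x * gup b f x from by rw [hgsym f b x hx],
        Finset.sum_congr rfl fun f _ => show schouten Γ e f x * gup f b x
          = schouten Γ e f x * gup b f x from by rw [hgsym f b x hx]]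
  have hRB2 : (∑ f, curv Γ b f e d x * gup c f x)
      = (∑ f, weyl Γ b f e d x * gup c f x) + kd b e * (∑ f, schouten Γ d f x * gup c f x) - kd b d * (∑ f, schouten Γ e f x * gup c f x) := by
    have hw : ∀ f : Fin n, curv Γ b f e d x
        = weyl Γ b f e d x + kd b e * schouten Γ d f x - kd b d * schouten Γ e f x := by
      intro f
      unfold weyl
      rw [hsp e d x hx]
      ring
    rw [Finset.sum_congr rfl fun f _ => show curv Γ b f e d x * gup c f x
        = weyl Γ b f e d x * gup c f x + kd b e * (schouten Γ d f x * gup c f x)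
          - kd b d * (schouten Γ e f x * gup c f x) from by rw [hw f]; ring]
    rw [Finset.sum_sub_distrib, Finset.sum_add_distrib, ← Finset.mul_sum, ← Finset.mul_sum]
  have bW1 : (∑ f, pd e (Γ c f d) x * gup f b x) - (∑ f, pd d (Γ c f e) x * gup f b x) + (∑ f, ∑ h, Γ c f e x * (Γ f h d x * gup h b x)) - (∑ f, ∑ h, Γ c f d x * (Γ f h e x * gup h b x))
      = (∑ f, weyl Γ c f e d x * gup b f x) + kd c e * (∑ f, schouten Γ d f x * gup b f x) - kd c d * (∑ f, schouten Γ e f x * gup b f x) := by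
    linear_combination hRC2 - hRC1
  have bW2 : (∑ f, pd e (Γ b f d) x * gup c f x) - (∑ f, pd d (Γ b f e) x * gup c f x) + (∑ f, ∑ h, Γ b f e x * (Γ f h d x * gup c h x)) - (∑ f, ∑ h, Γ b f d x * (Γ f h e x * gup c h x))
      = (∑ f, weyl Γ b f e d x * gup c f x) + kd b e * (∑ f, schouten Γ d f x * gup c f x) - kd b d * (∑ f, schouten Γ e f x * gup c f x) := by
    linear_combination hRB2 - hRB1
  have h0 : -(1/(n:ℝ)) * ((∑ a, ∑ f, weyl Γ c a f e x * gup a f x) * kd b d + (∑ a, ∑ f, weyl Γ b a f e x * gup a f x) * kd c d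
      - (∑ a, ∑ f, weyl Γ c a f d x * gup a f x) * kd b e - (∑ a, ∑ f, weyl Γ b a f d x * gup a f x) * kd c e) - (∑ f, weyl Γ c f e d x * gup b f x) - (∑ f, weyl Γ b f e d x * gup c f x) = 0 := by
    linear_combination hM + bW1 + bW2 - bX + bX2 - μ b x * bT1 - μ c x * bT2
  have hTexp : ∀ a f : Fin n, Ttensor Γ e d c b a f x * gup a f x =
      (1/4:ℝ) * (kd c a * (weyl Γ b f e d x * gup a f x))
    + (1/4:ℝ) * (kd c f * (weyl Γ b a e d x * gup a f x))
    + (1/4:ℝ) * (kd b a * (weyl Γ c f e d x * gup a f x))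
    + (1/4:ℝ) * (kd b f * (weyl Γ c a e d x * gup a f x))
    + (1/4:ℝ) * ((1/(n:ℝ)) * (kd b d * (weyl Γ c a f e x * gup a f x)))
    + (1/4:ℝ) * ((1/(n:ℝ)) * (kd b d * (weyl Γ c f a e x * gup a f x)))
    - (1/4:ℝ) * ((1/(n:ℝ)) * (kd b e * (weyl Γ c a f d x * gup a f x)))
    - (1/4:ℝ) * ((1/(n:ℝ)) * (kd b e * (weyl Γ c f a d x * gup a f x)))
    + (1/4:ℝ) * ((1/(n:ℝ)) * (kd c d * (weyl Γ b a f e x * gup a f x)))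
    + (1/4:ℝ) * ((1/(n:ℝ)) * (kd c d * (weyl Γ b f a e x * gup a f x)))
    - (1/4:ℝ) * ((1/(n:ℝ)) * (kd c e * (weyl Γ b a f d x * gup a f x)))
    - (1/4:ℝ) * ((1/(n:ℝ)) * (kd c e * (weyl Γ b f a d x * gup a f x))) := by
    intro a f
    unfold Ttensor
    ring
  have hT : (∑ a, ∑ f, Ttensor Γ e d c b a f x * gup a f x) =
      ((∑ f, weyl Γ b f e d x * gup c f x) + (∑ f, weyl Γ c f e d x * gup b f x))/2
      + (1/(n:ℝ)) * (((∑ a, ∑ f, weyl Γ c a f e x * gup a f x) * kd b d - (∑ a, ∑ f, weyl Γ c a f d x * gup a f x) * kd b e)/2)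
      + (1/(n:ℝ)) * (((∑ a, ∑ f, weyl Γ b a f e x * gup a f x) * kd c d - (∑ a, ∑ f, weyl Γ b a f d x * gup a f x) * kd c e)/2) := by
    rw [Finset.sum_congr rfl fun a _ => Finset.sum_congr rfl fun f _ => hTexp a f]
    simp only [Finset.sum_add_distrib, Finset.sum_sub_distrib, ← Finset.mul_sum]
    have s1 : (∑ a, kd c a * ∑ f, weyl Γ b f e d x * gup a f x) = (∑ f, weyl Γ b f e d x * gup c f x) :=
      sum_kd_mul c _
    have s2 : (∑ a, ∑ f, kd c f * (weyl Γ b a e d x * gup a f x)) = (∑ f, weyl Γ b f e d x * gup c f x) := by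
      rw [sum_sum_kd_inner]
      exact Finset.sum_congr rfl fun a _ => by rw [hgsym a c x hx]
    have s3 : (∑ a, kd b a * ∑ f, weyl Γ c f e d x * gup a f x) = (∑ f, weyl Γ c f e d x * gup b f x) :=
      sum_kd_mul b _
    have s4 : (∑ a, ∑ f, kd b f * (weyl Γ c a e d x * gup a f x)) = (∑ f, weyl Γ c f e d x * gup b f x) := by
      rw [sum_sum_kd_inner]
      exact Finset.sum_congr rfl fun a _ => by rw [hgsym a b x hx]
    have s6 : (∑ a, ∑ f, weyl Γ c f a e x * gup a f x) = (∑ a, ∑ f, weyl Γ c a f e x * gup a f x) := by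
      rw [Finset.sum_comm]
      exact Finset.sum_congr rfl fun a _ => Finset.sum_congr rfl fun f _ => by
        rw [hgsym f a x hx]
    have s8 : (∑ a, ∑ f, weyl Γ c f a d x * gup a f x) = (∑ a, ∑ f, weyl Γ c a f d x * gup a f x) := by
      rw [Finset.sum_comm]
      exact Finset.sum_congr rfl fun a _ => Finset.sum_congr rfl fun f _ => by
        rw [hgsym f a x hx]
    have s10 : (∑ a, ∑ f, weyl Γ b f a e x * gup a f x) = (∑ a, ∑ f, weyl Γ b a f e x * gup a f x) := by
      rw [Finset.sum_comm]
      exact Finset.sum_congr rfl fun a _ => Finset.sum_congr rfl fun f _ => by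
        rw [hgsym f a x hx]
    have s12 : (∑ a, ∑ f, weyl Γ b f a d x * gup a f x) = (∑ a, ∑ f, weyl Γ b a f d x * gup a f x) := by
      rw [Finset.sum_comm]
      exact Finset.sum_congr rfl fun a _ => Finset.sum_congr rfl fun f _ => by
        rw [hgsym f a x hx]
    rw [s1, s2, s3, s4, s6, s8, s10, s12]
    ring
  rw [hT]
  linear_combination (-(1/2 : ℝ)) * h0
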